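/- Let tr be the translation from SL to BSL that maps Xφ to EX tr(φ), φUφ' to E(tr(φ) U tr(φ')), and commutes with all other operators. For every CGS G, every SL formula φ, every assignment χ for φ, and every state q such that the SL semantics G, χ, q ⊨_SL φ is defined (i.e., every temporal subformula is evaluated under a complete assignment), it holds that G, χ, q ⊨_SL φ if and only if G, χ, q ⊨_BSL tr(φ). -/
import Mathlib


/-- A concurrent game structure: transition function, initial state, valuation. -/
structure CGS (S Ag Act AP : Type) where
  δ : S → (Ag → Act) → S
  init : S
  val : S → AP → Prop

variable {S Ag Act AP Var : Type}

/-- An initial (finite) path: a start state together with the list of decisions taken. -/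
abbrev FPath (S Ag Act : Type) := S × List (Ag → Act)

/-- Last state of an initial path. -/
def CGS.lastState (G : CGS S Ag Act AP) (ρ : FPath S Ag Act) : S :=
  ρ.2.foldl G.δ ρ.1

/-- A strategy assigns an action to every initial path. -/
abbrev Strat (S Ag Act : Type) := FPath S Ag Act → Act

/-- Concatenation of initial paths (meaningful when `G.lastState ρ = ρ'.1`,
i.e. they are glued at the shared state). -/
def FPath.concat (ρ ρ' : FPath S Ag Act) : FPath S Ag Act := (ρ.1, ρ.2 ++ ρ'.2)

/-- The finite prefix with `n` decisions of the play from `q` whose decision stream is `d`. -/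
def prefixPath (q : S) (d : ℕ → Ag → Act) (n : ℕ) : FPath S Ag Act :=
  (q, List.ofFn fun i : Fin n => d i)

/-- The state reached after `i` steps of the play from `q` with decision stream `d`. -/
def stateAt (G : CGS S Ag Act AP) (q : S) (d : ℕ → Ag → Act) (i : ℕ) : S :=
  G.lastState (prefixPath q d i)

/-- An assignment: a partial map from agents and variables to strategies. -/
abbrev Assign (S Ag Act Var : Type) := Ag ⊕ Var → Option (Strat S Ag Act)

/-- The outcome of an assignment from a state: the set of plays (identified with
their decision streams) compatible with all strategies assigned to agents. -/
def outcome (G : CGS S Ag Act AP) (q : S) (χ : Assign S Ag Act Var) :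
    Set (ℕ → Ag → Act) :=
  {d | ∀ (k : ℕ) (a : Ag) (σ : Strat S Ag Act),
      χ (Sum.inl a) = some σ → d k a = σ (prefixPath q d k)}

/-- The `ρ`-translation of a strategy. -/
def transStrat [DecidableEq S] (G : CGS S Ag Act AP) (ρ : FPath S Ag Act)
    (σ : Strat S Ag Act) : Strat S Ag Act :=
  fun ρ' => if ρ'.1 = G.lastState ρ then σ (ρ.concat ρ') else σ ρ'

/-- The `ρ`-translation of an assignment. -/
def transAssign [DecidableEq S] (G : CGS S Ag Act AP) (ρ : FPath S Ag Act)
    (χ : Assign S Ag Act Var) : Assign S Ag Act Var :=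
  fun l => (χ l).map (transStrat G ρ)

/-- Syntax of Strategy Logic (SL). -/
inductive SLForm (AP Ag Var : Type) : Type where
  | atom : AP → SLForm AP Ag Var
  | neg  : SLForm AP Ag Var → SLForm AP Ag Var
  | or   : SLForm AP Ag Var → SLForm AP Ag Var → SLForm AP Ag Var
  | next : SLForm AP Ag Var → SLForm AP Ag Var
  | untl : SLForm AP Ag Var → SLForm AP Ag Var → SLForm AP Ag Var
  | exi  : Var → SLForm AP Ag Var → SLForm AP Ag Var
  | bind : Ag → Var → SLForm AP Ag Var → SLForm AP Ag Var

mutual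
/-- State formulas of Branching-time Strategy Logic (BSL). -/
inductive BSLForm (AP Ag Var : Type) : Type where
  | atom : AP → BSLForm AP Ag Var
  | neg  : BSLForm AP Ag Var → BSLForm AP Ag Var
  | or   : BSLForm AP Ag Var → BSLForm AP Ag Var → BSLForm AP Ag Var
  | exi  : Var → BSLForm AP Ag Var → BSLForm AP Ag Var
  | bind : Ag → Var → BSLForm AP Ag Var → BSLForm AP Ag Var
  | unbind : Ag → BSLForm AP Ag Var → BSLForm AP Ag Var
  | pathE : BSLPath AP Ag Var → BSLForm AP Ag Var
/-- Path formulas of BSL. -/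
inductive BSLPath (AP Ag Var : Type) : Type where
  | state : BSLForm AP Ag Var → BSLPath AP Ag Var
  | neg   : BSLPath AP Ag Var → BSLPath AP Ag Var
  | or    : BSLPath AP Ag Var → BSLPath AP Ag Var → BSLPath AP Ag Var
  | next  : BSLPath AP Ag Var → BSLPath AP Ag Var
  | untl  : BSLPath AP Ag Var → BSLPath AP Ag Var → BSLPath AP Ag Var
end

/-- Semantics of SL. Temporal operators are evaluated on an outcome play of the
current assignment (for complete assignments — the only case where the SL
semantics is defined — this play is unique), with the assignment translated
along the play. -/
def SLsat [DecidableEq S] [DecidableEq Ag] [DecidableEq Var] (G : CGS S Ag Act AP) :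
    Assign S Ag Act Var → S → SLForm AP Ag Var → Prop
  | χ, q, .atom p => G.val q p
  | χ, q, .neg φ => ¬ SLsat G χ q φ
  | χ, q, .or φ φ' => SLsat G χ q φ ∨ SLsat G χ q φ'
  | χ, q, .exi x φ =>
      ∃ σ : Strat S Ag Act, SLsat G (Function.update χ (Sum.inr x) (some σ)) q φ
  | χ, q, .bind a x φ => SLsat G (Function.update χ (Sum.inl a) (χ (Sum.inr x))) q φ
  | χ, q, .next φ => ∃ d ∈ outcome G q χ,
      SLsat G (transAssign G (prefixPath q d 1) χ) (stateAt G q d 1) φ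
  | χ, q, .untl φ φ' => ∃ d ∈ outcome G q χ, ∃ j : ℕ,
      SLsat G (transAssign G (prefixPath q d j) χ) (stateAt G q d j) φ' ∧
      ∀ k < j, SLsat G (transAssign G (prefixPath q d k) χ) (stateAt G q d k) φ

mutual
/-- Semantics of BSL state formulas, at a state under an assignment. -/
def BSLsat [DecidableEq S] [DecidableEq Ag] [DecidableEq Var] (G : CGS S Ag Act AP)
    (χ : Assign S Ag Act Var) (q : S) : BSLForm AP Ag Var → Prop
  | .atom p => G.val q p
  | .neg φ => ¬ BSLsat G χ q φ
  | .or φ φ' => BSLsat G χ q φ ∨ BSLsat G χ q φ'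
  | .exi x φ =>
      ∃ σ : Strat S Ag Act, BSLsat G (Function.update χ (Sum.inr x) (some σ)) q φ
  | .bind a x φ => BSLsat G (Function.update χ (Sum.inl a) (χ (Sum.inr x))) q φ
  | .unbind a φ => BSLsat G (Function.update χ (Sum.inl a) none) q φ
  | .pathE ψ => ∃ d ∈ outcome G q χ, BSLsatP G χ q d 0 ψ

/-- Semantics of BSL path formulas, on the play from `q` with decision stream
`d`, at position `i`; the assignment is translated by the prefix as state
formulas are evaluated. -/
def BSLsatP [DecidableEq S] [DecidableEq Ag] [DecidableEq Var] (G : CGS S Ag Act AP)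
    (χ : Assign S Ag Act Var) (q : S) (d : ℕ → Ag → Act) (i : ℕ) :
    BSLPath AP Ag Var → Prop
  | .state φ => BSLsat G (transAssign G (prefixPath q d i) χ) (stateAt G q d i) φ
  | .neg ψ => ¬ BSLsatP G χ q d i ψ
  | .or ψ ψ' => BSLsatP G χ q d i ψ ∨ BSLsatP G χ q d i ψ'
  | .next ψ => BSLsatP G χ q d (i + 1) ψ
  | .untl ψ ψ' => ∃ j, i ≤ j ∧ BSLsatP G χ q d j ψ' ∧
      ∀ k, i ≤ k → k < j → BSLsatP G χ q d k ψ
end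

/-- Free variables of an SL formula. -/
def SLfree : SLForm AP Ag Var → Set Var
  | .atom _ => ∅
  | .neg φ => SLfree φ
  | .or φ φ' => SLfree φ ∪ SLfree φ'
  | .next φ => SLfree φ
  | .untl φ φ' => SLfree φ ∪ SLfree φ'
  | .exi x φ => SLfree φ \ {x}
  | .bind _ x φ => insert x (SLfree φ)

mutual
/-- Free variables of a BSL state formula. -/
def BSLfree : BSLForm AP Ag Var → Set Var
  | .atom _ => ∅
  | .neg φ => BSLfree φ
  | .or φ φ' => BSLfree φ ∪ BSLfree φ'
  | .exi x φ => BSLfree φ \ {x}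
  | .bind _ x φ => insert x (BSLfree φ)
  | .unbind _ φ => BSLfree φ
  | .pathE ψ => BSLfreeP ψ
/-- Free variables of a BSL path formula. -/
def BSLfreeP : BSLPath AP Ag Var → Set Var
  | .state φ => BSLfree φ
  | .neg ψ => BSLfreeP ψ
  | .or ψ ψ' => BSLfreeP ψ ∪ BSLfreeP ψ'
  | .next ψ => BSLfreeP ψ
  | .untl ψ ψ' => BSLfreeP ψ ∪ BSLfreeP ψ'
end

/-- `SLdefFor A φ` holds when the SL semantics of `φ` is defined in every
assignment whose agent-domain is `A`: every temporal operator is only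
evaluated under a complete assignment (every agent being bound on the way). -/
def SLdefFor (A : Set Ag) : SLForm AP Ag Var → Prop
  | .atom _ => True
  | .neg φ => SLdefFor A φ
  | .or φ φ' => SLdefFor A φ ∧ SLdefFor A φ'
  | .exi _ φ => SLdefFor A φ
  | .bind a _ φ => SLdefFor (insert a A) φ
  | .next φ => A = Set.univ ∧ SLdefFor A φ
  | .untl φ φ' => A = Set.univ ∧ SLdefFor A φ ∧ SLdefFor A φ'

/-- The translation `tr : SL → BSL`, inserting a path quantifier in front of
each temporal operator and homomorphic elsewhere. -/
def tr : SLForm AP Ag Var → BSLForm AP Ag Var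
  | .atom p => .atom p
  | .neg φ => .neg (tr φ)
  | .or φ φ' => .or (tr φ) (tr φ')
  | .next φ => .pathE (.next (.state (tr φ)))
  | .untl φ φ' => .pathE (.untl (.state (tr φ)) (.state (tr φ')))
  | .exi x φ => .exi x (tr φ)
  | .bind a x φ => .bind a x (tr φ)

lemma transAssign_isSome [DecidableEq S] (G : CGS S Ag Act AP) (ρ : FPath S Ag Act)
    (χ : Assign S Ag Act Var) (l : Ag ⊕ Var) :
    (transAssign G ρ χ l).isSome = (χ l).isSome := by
  simp [transAssign]

lemma transAssign_dom [DecidableEq S] (G : CGS S Ag Act AP) (ρ : FPath S Ag Act)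
    (χ : Assign S Ag Act Var) :
    {a : Ag | ((transAssign G ρ χ) (Sum.inl a)).isSome} =
      {a : Ag | (χ (Sum.inl a)).isSome} := by
  ext a; simp [transAssign_isSome]

/-- whenever the SL semantics of `φ` is defined under `χ` (every
temporal subformula is evaluated under a complete assignment) and `χ` is an
assignment for `φ`, then `G, χ, q ⊨_SL φ` iff `G, χ, q ⊨_BSL tr(φ)`. -/
theorem statement_4 [DecidableEq S] [DecidableEq Ag] [DecidableEq Var]
    (G : CGS S Ag Act AP) (φ : SLForm AP Ag Var) (χ : Assign S Ag Act Var) (q : S)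
    (hdef : SLdefFor {a : Ag | (χ (Sum.inl a)).isSome} φ)
    (hfor : ∀ x ∈ SLfree φ, (χ (Sum.inr x)).isSome) :
    SLsat G χ q φ ↔ BSLsat G χ q (tr φ) := by
  revert hdef hfor
  induction φ generalizing χ q with
  | atom p => intro _ _; simp [SLsat, tr, BSLsat]
  | neg φ ih =>
    intro hdef hfor
    simp only [SLsat, tr, BSLsat]
    exact not_congr (ih χ q hdef hfor)
  | or φ φ' ih ih' =>
    intro hdef hfor
    simp only [SLsat, tr, BSLsat]
    exact or_congr (ih χ q hdef.1 fun x hx => hfor x (Or.inl hx))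
      (ih' χ q hdef.2 fun x hx => hfor x (Or.inr hx))
  | next φ ih =>
    intro hdef hfor
    simp only [SLsat, tr, BSLsat, BSLsatP]
    refine exists_congr fun d => and_congr_right fun _ => ?_
    refine ih _ _ ?_ ?_
    · rw [transAssign_dom]; exact hdef.2
    · intro x hx; rw [transAssign_isSome]; exact hfor x hx
  | untl φ φ' ih ih' =>
    intro hdef hfor
    simp only [SLsat, tr, BSLsat, BSLsatP]
    refine exists_congr fun d => and_congr_right fun _ => exists_congr fun j => ?_
    have h1 : ∀ k, SLsat G (transAssign G (prefixPath q d k) χ) (stateAt G q d k) φ ↔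
        BSLsat G (transAssign G (prefixPath q d k) χ) (stateAt G q d k) (tr φ) := by
      intro k
      refine ih _ _ ?_ ?_
      · rw [transAssign_dom]; exact hdef.2.1
      · intro x hx; rw [transAssign_isSome]; exact hfor x (Or.inl hx)
    have h2 : ∀ k, SLsat G (transAssign G (prefixPath q d k) χ) (stateAt G q d k) φ' ↔
        BSLsat G (transAssign G (prefixPath q d k) χ) (stateAt G q d k) (tr φ') := by
      intro k
      refine ih' _ _ ?_ ?_
      · rw [transAssign_dom]; exact hdef.2.2
      · intro x hx; rw [transAssign_isSome]; exact hfor x (Or.inr hx)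
    constructor
    · rintro ⟨hj, hk⟩
      exact ⟨Nat.zero_le _, (h2 j).1 hj, fun k _ hk' => (h1 k).1 (hk k hk')⟩
    · rintro ⟨_, hj, hk⟩
      exact ⟨(h2 j).2 hj, fun k hk' => (h1 k).2 (hk k (Nat.zero_le _) hk')⟩
  | exi x φ ih =>
    intro hdef hfor
    simp only [SLsat, tr, BSLsat]
    refine exists_congr fun σ => ?_
    refine ih _ _ ?_ ?_
    · have : {a : Ag | ((Function.update χ (Sum.inr x) (some σ)) (Sum.inl a)).isSome} =
          {a : Ag | (χ (Sum.inl a)).isSome} := by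
        ext a; simp [Function.update_of_ne]
      rw [this]; exact hdef
    · intro y hy
      by_cases h : (Sum.inr y : Ag ⊕ Var) = Sum.inr x
      · rw [h, Function.update_self]; rfl
      · rw [Function.update_of_ne h]
        exact hfor y ⟨hy, by simpa using h⟩
  | bind a x φ ih =>
    intro hdef hfor
    have hx : (χ (Sum.inr x)).isSome := hfor x (Or.inl rfl)
    simp only [SLsat, tr, BSLsat]
    refine ih _ _ ?_ ?_
    · have : {a' : Ag | ((Function.update χ (Sum.inl a) (χ (Sum.inr x))) (Sum.inl a')).isSome} =
          insert a {a' : Ag | (χ (Sum.inl a')).isSome} := by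
        ext a'
        by_cases h : a' = a
        · subst h; simp [Function.update_self, hx]
        · simp [Function.update_of_ne (by simpa using h : (Sum.inl a' : Ag ⊕ Var) ≠ Sum.inl a), h]
      rw [this]; exact hdef
    · intro y hy
      rw [Function.update_of_ne (by simp)]
      exact hfor y (Or.inr hy)
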